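/- arXiv:2107.13447 — 2 statements merged into one kernel-verified Lean document; each statement's English description precedes it below -/
import Mathlib

section
/- Let J = diag(1, −1) ∈ GL_2(ℂ). Then {A ∈ GL_2(ℂ) : J · A^{−1} · J = A} = {A ∈ GL_2(ℂ) : A_{11} = A_{22} and det A = 1} ∪ {J, −J}. In particular the fixed point set G^τ strictly contains the orbit (G^τ)^0, and the complement G^τ − (G^τ)^0 consists of the two diagonal matrices diag(1,−1) and diag(−1,1). -/
set_option linter.unreachableTactic false
set_option linter.unusedTactic false

/-- The matrix `J = diag(1, −1)`. -/
def Jmat : Matrix (Fin 2) (Fin 2) ℂ := !![1, 0; 0, -1]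

lemma JJ : Jmat * Jmat = 1 := by
  simp [Jmat, Matrix.mul_fin_two, Matrix.one_fin_two]

lemma Jdet : Jmat.det = -1 := by simp [Jmat]

/-- `A` is fixed by `τ` iff `A·J·A = J`. -/
lemma fixed_iff (A : Matrix (Fin 2) (Fin 2) ℂ) :
    (A.det ≠ 0 ∧ Jmat * A⁻¹ * Jmat = A) ↔ A * Jmat * A = Jmat := by
  constructor
  · rintro ⟨h1, h2⟩
    have hAi : A⁻¹ * A = 1 := Matrix.nonsing_inv_mul A (isUnit_iff_ne_zero.mpr h1)
    calc A * Jmat * A = (Jmat * A⁻¹ * Jmat) * Jmat * A := by rw [h2]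
      _ = Jmat * (A⁻¹ * ((Jmat * Jmat) * A)) := by noncomm_ring
      _ = Jmat := by rw [JJ, one_mul, hAi, mul_one]
  · intro h
    have hdet : A.det * (-1) * A.det = -1 := by
      have := congrArg Matrix.det h
      rw [Matrix.det_mul, Matrix.det_mul] at this
      simpa [Jmat] using this
    have h1 : A.det ≠ 0 := by
      intro h0; rw [h0] at hdet; norm_num at hdet
    have hinv : A⁻¹ = Jmat * A * Jmat := by
      apply Matrix.inv_eq_left_inv
      calc Jmat * A * Jmat * A = Jmat * (A * Jmat * A) := by noncomm_ring
        _ = 1 := by rw [h, JJ]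
    refine ⟨h1, ?_⟩
    rw [hinv]
    calc Jmat * (Jmat * A * Jmat) * Jmat = (Jmat * Jmat) * A * (Jmat * Jmat) := by noncomm_ring
      _ = A := by rw [JJ, one_mul, mul_one]

/-- Entrywise characterization of `A·J·A = J`. -/
lemma AJA_iff (A : Matrix (Fin 2) (Fin 2) ℂ) :
    A * Jmat * A = Jmat ↔ (A 0 0 = A 1 1 ∧ A.det = 1) ∨ A = Jmat ∨ A = -Jmat := by
  constructor
  · intro h
    have e00 : (A * Jmat * A) 0 0 = Jmat 0 0 := by rw [h]
    have e01 : (A * Jmat * A) 0 1 = Jmat 0 1 := by rw [h]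
    have e10 : (A * Jmat * A) 1 0 = Jmat 1 0 := by rw [h]
    have e11 : (A * Jmat * A) 1 1 = Jmat 1 1 := by rw [h]
    simp [Matrix.mul_apply, Fin.sum_univ_two, Jmat] at e00 e01 e10 e11
    by_cases hd : A 0 0 = A 1 1
    · left
      refine ⟨hd, ?_⟩
      rw [Matrix.det_fin_two]
      linear_combination e00 - A 0 0 * hd
    · right
      have hsub : A 0 0 - A 1 1 ≠ 0 := sub_ne_zero.mpr hd
      have hb : A 0 1 = 0 := by
        have : A 0 1 * (A 0 0 - A 1 1) = 0 := by linear_combination e01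
        rcases mul_eq_zero.mp this with h' | h'
        · exact h'
        · exact absurd h' hsub
      have hc : A 1 0 = 0 := by
        have : A 1 0 * (A 0 0 - A 1 1) = 0 := by linear_combination e10
        rcases mul_eq_zero.mp this with h' | h'
        · exact h'
        · exact absurd h' hsub
      have ha2 : A 0 0 * A 0 0 = 1 := by linear_combination e00 + A 1 0 * hb
      have hd2 : A 1 1 * A 1 1 = 1 := by linear_combination -e11 + A 0 1 * hc
      rcases mul_self_eq_one_iff.mp ha2 with ha | ha <;>
        rcases mul_self_eq_one_iff.mp hd2 with hdd | hdd
      · exact absurd (ha.trans hdd.symm) hd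
      · left
        rw [Matrix.eta_fin_two A, ha, hb, hc, hdd]; rfl
      · right
        rw [Matrix.eta_fin_two A, ha, hb, hc, hdd]
        show _ = -(!![1,0;0,-1] : Matrix (Fin 2) (Fin 2) ℂ)
        norm_num
      · exact absurd (ha.trans hdd.symm) hd
  · rintro (⟨hd, hdet⟩ | h | h)
    · rw [Matrix.det_fin_two] at hdet
      ext i j
      fin_cases i <;> fin_cases j <;>
        simp [Matrix.mul_apply, Fin.sum_univ_two, Jmat] <;>
        first
          | linear_combination hdet + A 0 0 * hd
          | linear_combination -hdet + A 1 1 * hd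
          | linear_combination hdet - A 0 0 * hd
          | linear_combination -hdet - A 1 1 * hd
          | linear_combination A 0 1 * hd
          | linear_combination A 1 0 * hd
          | linear_combination -(A 0 1) * hd
          | linear_combination -(A 1 0) * hd
          | ring
    · rw [h]
      rw [show Jmat * Jmat * Jmat = (Jmat * Jmat) * Jmat from rfl, JJ, one_mul]
    · rw [h]
      calc -Jmat * Jmat * -Jmat = Jmat * Jmat * Jmat := by noncomm_ring
        _ = Jmat := by rw [JJ, one_mul]

/-- Every element of the orbit of the identity has equal diagonal entries and determinant 1. -/
lemma orbit_diag (g : GL (Fin 2) ℂ) :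
    ((g : Matrix (Fin 2) (Fin 2) ℂ) * Jmat * ((g⁻¹ : GL (Fin 2) ℂ) : Matrix (Fin 2) (Fin 2) ℂ) * Jmat) 0 0
      = ((g : Matrix (Fin 2) (Fin 2) ℂ) * Jmat * ((g⁻¹ : GL (Fin 2) ℂ) : Matrix (Fin 2) (Fin 2) ℂ) * Jmat) 1 1 := by
  set gm : Matrix (Fin 2) (Fin 2) ℂ := ↑g with hgm
  set gi : Matrix (Fin 2) (Fin 2) ℂ := ↑g⁻¹ with hgi
  set B := gm * Jmat * gi * Jmat with hB
  have hmul' : gi * gm = 1 := g.inv_mul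
  have htr : (B * Jmat).trace = 0 := by
    have hBJ : B * Jmat = gm * Jmat * gi := by
      rw [hB, mul_assoc (gm * Jmat * gi), JJ, mul_one]
    rw [hBJ, Matrix.trace_mul_comm, ← mul_assoc, hmul', one_mul]
    simp [Jmat, Matrix.trace_fin_two]
  simp [Matrix.trace_fin_two, Matrix.mul_apply, Fin.sum_univ_two, Jmat] at htr
  linear_combination htr

/-- Any matrix with equal diagonal entries and determinant 1 lies in the orbit of the identity. -/
lemma mem_orbit_of (A : Matrix (Fin 2) (Fin 2) ℂ) (hd : A 0 0 = A 1 1) (hdet : A.det = 1) :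
    ∃ g : GL (Fin 2) ℂ,
      A = (g : Matrix (Fin 2) (Fin 2) ℂ) * Jmat *
        ((g⁻¹ : GL (Fin 2) ℂ) : Matrix (Fin 2) (Fin 2) ℂ) * Jmat := by
  rw [Matrix.det_fin_two] at hdet
  have hbc : A 0 0 * A 0 0 - A 0 1 * A 1 0 = 1 := by
    linear_combination hdet + A 0 0 * hd
  obtain ⟨M, hMdet, hM⟩ : ∃ M : Matrix (Fin 2) (Fin 2) ℂ, M.det ≠ 0 ∧ A * Jmat * M = M * Jmat := by
    by_cases ha : A 0 0 = 1
    · refine ⟨!![2, A 0 1; A 1 0, 2], ?_, ?_⟩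
      · rw [Matrix.det_fin_two_of]
        have : A 0 1 * A 1 0 = 0 := by linear_combination -hbc + (A 0 0 + 1) * ha
        intro h0
        rw [this] at h0
        norm_num at h0
      · ext i j
        fin_cases i <;> fin_cases j <;>
          simp [Matrix.mul_apply, Fin.sum_univ_two, Jmat] <;>
          first
            | linear_combination hbc + (A 0 0 + 1) * ha
            | linear_combination -hbc - (A 0 0 + 1) * ha
            | linear_combination A 0 1 * hd - ha * A 0 1
            | linear_combination -(A 0 1) * hd + ha * A 0 1
            | linear_combination A 1 0 * hd - ha * A 1 0
            | linear_combination -(A 1 0) * hd + ha * A 1 0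
            | linear_combination A 0 1 * hd
            | linear_combination A 1 0 * hd
            | linear_combination -(A 0 1) * hd
            | linear_combination -(A 1 0) * hd
            | linear_combination 2 * ha
            | linear_combination -2 * ha
            | linear_combination hbc - (A 0 0 - 1) * ha
            | linear_combination A 0 1 * ha
            | linear_combination -hbc + 2 * hd + (A 0 0 - 1) * ha
            | ring
    · refine ⟨!![A 0 1, A 0 0 - 1; A 0 0 - 1, A 1 0], ?_, ?_⟩
      · rw [Matrix.det_fin_two_of]
        have : A 0 1 * A 1 0 - (A 0 0 - 1) * (A 0 0 - 1) = 2 * (A 0 0 - 1) := by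
          linear_combination -hbc
        rw [this]
        intro h0
        rcases mul_eq_zero.mp h0 with h' | h'
        · norm_num at h'
        · exact ha (by linear_combination h')
      · ext i j
        fin_cases i <;> fin_cases j <;>
          simp [Matrix.mul_apply, Fin.sum_univ_two, Jmat] <;>
          first
            | linear_combination hbc
            | linear_combination -hbc
            | linear_combination A 0 1 * hd
            | linear_combination -(A 0 1) * hd
            | linear_combination A 1 0 * hd
            | linear_combination -(A 1 0) * hd
            | linear_combination (A 0 0 - 1) * hd
            | linear_combination -(A 0 0 - 1) * hd
            | linear_combination -hbc + (A 0 0 - 1) * hd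
            | linear_combination hbc - (A 0 0 - 1) * hd
            | ring
  refine ⟨Matrix.GeneralLinearGroup.mkOfDetNeZero M hMdet, ?_⟩
  set g := Matrix.GeneralLinearGroup.mkOfDetNeZero M hMdet with hg
  have hcoe : (g : Matrix (Fin 2) (Fin 2) ℂ) = M := rfl
  set gi := ((g⁻¹ : GL (Fin 2) ℂ) : Matrix (Fin 2) (Fin 2) ℂ) with hgi
  have hMg : M * gi = 1 := by rw [← hcoe]; exact g.mul_inv
  rw [hcoe]
  calc A = A * Jmat * Jmat := by rw [mul_assoc, JJ, mul_one]
    _ = A * Jmat * (M * gi) * Jmat := by rw [hMg, mul_one]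
    _ = A * Jmat * M * gi * Jmat := by noncomm_ring
    _ = M * Jmat * gi * Jmat := by rw [hM]

/-- Lusztig 5.1 for `n = 2`: the fixed point set `G^τ = {A ∈ GL₂(ℂ) : J·A⁻¹·J = A}` equals
the union of `(G^τ)⁰ = {A : A₁₁ = A₂₂, det A = 1}` with `{J, −J}`; in particular
`G^τ − (G^τ)⁰ = {J, −J}`, where `(G^τ)⁰ = {g·J·g⁻¹·J : g ∈ GL₂(ℂ)}`. -/
theorem tau_fixed_points :
    {A : Matrix (Fin 2) (Fin 2) ℂ | A.det ≠ 0 ∧ Jmat * A⁻¹ * Jmat = A} =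
      {A : Matrix (Fin 2) (Fin 2) ℂ | A 0 0 = A 1 1 ∧ A.det = 1} ∪ {Jmat, -Jmat} ∧
    {A : Matrix (Fin 2) (Fin 2) ℂ | A.det ≠ 0 ∧ Jmat * A⁻¹ * Jmat = A} \
        {A : Matrix (Fin 2) (Fin 2) ℂ | ∃ g : GL (Fin 2) ℂ,
          A = (g : Matrix (Fin 2) (Fin 2) ℂ) * Jmat *
            ((g⁻¹ : GL (Fin 2) ℂ) : Matrix (Fin 2) (Fin 2) ℂ) * Jmat} =
      {Jmat, -Jmat} := by
  constructor
  · ext A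
    simp only [Set.mem_setOf_eq, Set.mem_union, Set.mem_insert_iff, Set.mem_singleton_iff]
    rw [fixed_iff, AJA_iff]
  · ext A
    simp only [Set.mem_diff, Set.mem_setOf_eq, Set.mem_insert_iff, Set.mem_singleton_iff]
    constructor
    · rintro ⟨hfix, hnot⟩
      rcases (AJA_iff A).mp ((fixed_iff A).mp hfix) with ⟨hd, hdet⟩ | h | h
      · exact absurd (mem_orbit_of A hd hdet) hnot
      · exact Or.inl h
      · exact Or.inr h
    · intro h
      constructor
      · exact (fixed_iff A).mpr ((AJA_iff A).mpr (Or.inr h))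
      · rintro ⟨g, hg⟩
        have hdiag := orbit_diag g
        rw [← hg] at hdiag
        rcases h with h | h <;> rw [h] at hdiag <;>
          simp [Jmat] at hdiag <;> norm_num at hdiag
end

section
/- In the ring of 3×3 real matrices, let x_1(a) = I + a·E_{12} and x_2(a) = I + a·E_{23}. Then the map (a, b) ↦ x_2(b)·x_1(a)·x_1(a)·x_2(b) is a bijection from ℝ_{>0} × ℝ_{>0} onto the set of upper unitriangular 3×3 real matrices u with u_{12} > 0, u_{23} > 0 and 2·u_{13} = u_{12}·u_{23}. -/
/-- The Chevalley generator `x₁(a) = I + a·E₁₂` of the upper unitriangular subgroup of `SL₃(ℝ)`. -/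
def x1 (a : ℝ) : Matrix (Fin 3) (Fin 3) ℝ := !![1, a, 0; 0, 1, 0; 0, 0, 1]

/-- The Chevalley generator `x₂(a) = I + a·E₂₃` of the upper unitriangular subgroup of `SL₃(ℝ)`. -/
def x2 (a : ℝ) : Matrix (Fin 3) (Fin 3) ℝ := !![1, 0, 0; 0, 1, a; 0, 0, 1]

theorem x1_mul_x1 (a b : ℝ) : x1 a * x1 b = x1 (a + b) := by
  simp [x1, add_comm]

theorem x2_mul_x1_mul_x1_mul_x2 (a b : ℝ) :
    x2 b * x1 a * x1 a * x2 b = !![1, 2 * a, 2 * a * b; 0, 1, 2 * b; 0, 0, 1] := by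
  rw [mul_assoc (x2 b), x1_mul_x1]
  simp [x1, x2, two_mul]

theorem Matrix.eq_of_unitriangular_fin_three {R : Type*} [Zero R] [One R]
    {u : Matrix (Fin 3) (Fin 3) R} (h00 : u 0 0 = 1) (h11 : u 1 1 = 1) (h22 : u 2 2 = 1)
    (h10 : u 1 0 = 0) (h20 : u 2 0 = 0) (h21 : u 2 1 = 0) :
    u = !![1, u 0 1, u 0 2; 0, 1, u 1 2; 0, 0, 1] := by
  refine (Matrix.eta_fin_three u).trans ?_
  rw [h00, h11, h22, h10, h20, h21]

/-- Lusztig 2.4(a) for type `A₂`, trivial diagram involution, `w = w₀`: the map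
`(a, b) ↦ x₂(b)x₁(a)x₁(a)x₂(b)` is a bijection from `ℝ_{>0} × ℝ_{>0}` onto the set of
upper unitriangular matrices `u` with `u₁₂ > 0`, `u₂₃ > 0` and `2u₁₃ = u₁₂·u₂₃`. -/
theorem top_cell_parametrization :
    Set.BijOn (fun p : ℝ × ℝ => x2 p.2 * x1 p.1 * x1 p.1 * x2 p.2)
      (Set.Ioi 0 ×ˢ Set.Ioi 0)
      {u : Matrix (Fin 3) (Fin 3) ℝ |
        u 0 0 = 1 ∧ u 1 1 = 1 ∧ u 2 2 = 1 ∧ u 1 0 = 0 ∧ u 2 0 = 0 ∧ u 2 1 = 0 ∧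
        0 < u 0 1 ∧ 0 < u 1 2 ∧ 2 * u 0 2 = u 0 1 * u 1 2} := by
  simp only [x2_mul_x1_mul_x1_mul_x2]
  refine ⟨?mapsTo, ?injOn, ?surjOn⟩
  case mapsTo =>
    rintro ⟨a, b⟩ ⟨ha, hb⟩
    refine ⟨rfl, rfl, rfl, rfl, rfl, rfl, mul_pos two_pos ha, mul_pos two_pos hb, ?_⟩
    show 2 * (2 * a * b) = 2 * a * (2 * b)
    ring
  case injOn =>
    rintro ⟨a, b⟩ - ⟨c, d⟩ - h
    have hac : 2 * a = 2 * c := by simpa using congrFun (congrFun h 0) 1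
    have hbd : 2 * b = 2 * d := by simpa using congrFun (congrFun h 1) 2
    exact Prod.ext (by linarith) (by linarith)
  case surjOn =>
    rintro u ⟨h00, h11, h22, h10, h20, h21, h01, h12, h02⟩
    refine ⟨(u 0 1 / 2, u 1 2 / 2), ⟨half_pos h01, half_pos h12⟩, ?_⟩
    have h01' : 2 * (u 0 1 / 2) = u 0 1 := by ring
    have h12' : 2 * (u 1 2 / 2) = u 1 2 := by ring
    have h02' : 2 * (u 0 1 / 2) * (u 1 2 / 2) = u 0 2 := by linear_combination -h02 / 2
    dsimp only
    rw [h02', h01', h12']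
    exact (Matrix.eq_of_unitriangular_fin_three h00 h11 h22 h10 h20 h21).symm
end
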